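/- arXiv:2506.11609 — 2 statements merged into one kernel-verified Lean document; each statement's English description precedes it below -/
import Mathlib

section
/- Let P and Q be subgroups of a finite group G and let x ∈ G be chosen uniformly at random. Then the expected value of |P ∩ Q^x| equals ∑_C |C ∩ P| · |C ∩ Q| / |C|, where the sum runs over the conjugacy classes C of G. -/
open Finset

section aux
open scoped Classical
variable {G : Type*} [Group G] [Fintype G]

lemma aux_fiber (g q x₀ : G) (hx₀ : x₀ * g * x₀⁻¹ = q) :
    (univ.filter fun x : G => x * g * x⁻¹ = q).card
      = (univ.filter fun x : G => x * g * x⁻¹ = g).card := by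
  apply Finset.card_bij (fun x _ => x₀⁻¹ * x)
  · intro x hx
    simp only [mem_filter, mem_univ, true_and] at hx ⊢
    have hx' : x * g * x⁻¹ = x₀ * g * x₀⁻¹ := hx.trans hx₀.symm
    have h2 : x₀⁻¹ * (x * g * x⁻¹) * x₀ = g := by rw [hx']; group
    calc x₀⁻¹ * x * g * (x₀⁻¹ * x)⁻¹ = x₀⁻¹ * (x * g * x⁻¹) * x₀ := by group
    _ = g := h2
  · intro x hx y hy h
    exact mul_left_cancel h
  · intro y hy
    refine ⟨x₀ * y, ?_, by group⟩
    simp only [mem_filter, mem_univ, true_and] at hy ⊢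
    calc x₀ * y * g * (x₀ * y)⁻¹ = x₀ * (y * g * y⁻¹) * x₀⁻¹ := by group
    _ = q := by rw [hy, hx₀]

lemma aux_count (Q : Subgroup G) (g : G) :
    (univ.filter fun x : G => x * g * x⁻¹ ∈ Q).card
      = ((ConjClasses.mk g).carrier ∩ (Q : Set G)).ncard *
        (univ.filter fun x : G => x * g * x⁻¹ = g).card := by
  rw [Set.ncard_eq_toFinset_card']
  rw [Finset.card_eq_sum_card_fiberwise
    (f := fun x : G => x * g * x⁻¹) (t := ((ConjClasses.mk g).carrier ∩ (Q : Set G)).toFinset)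
    (fun x hx => by
      simp only [Finset.mem_coe, mem_filter, mem_univ, true_and] at hx
      simp only [Finset.mem_coe, Set.mem_toFinset, Set.mem_inter_iff, ConjClasses.mem_carrier_iff_mk_eq,
        SetLike.mem_coe]
      refine ⟨ConjClasses.mk_eq_mk_iff_isConj.mpr ?_, hx⟩
      exact isConj_iff.mpr ⟨x⁻¹, by group⟩)]
  have hfib : ∀ q ∈ ((ConjClasses.mk g).carrier ∩ (Q : Set G)).toFinset,
      ((univ.filter fun x : G => x * g * x⁻¹ ∈ Q).filter fun x => x * g * x⁻¹ = q).card
        = (univ.filter fun x : G => x * g * x⁻¹ = g).card := by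
    intro q hq
    simp only [Set.mem_toFinset, Set.mem_inter_iff, ConjClasses.mem_carrier_iff_mk_eq,
      SetLike.mem_coe] at hq
    obtain ⟨hq1, hq2⟩ := hq
    obtain ⟨c, hc⟩ := ConjClasses.mk_eq_mk_iff_isConj.mp hq1.symm
    have hc' : (c : G) * g * (c : G)⁻¹ = q := by
      rw [mul_inv_eq_iff_eq_mul]; exact hc
    rw [← aux_fiber g q (c : G) hc']
    congr 1
    ext x
    simp only [mem_filter, mem_univ, true_and, and_iff_right_iff_imp]
    intro hxq; rw [hxq]; exact hq2
  rw [Finset.sum_congr rfl hfib, Finset.sum_const, smul_eq_mul]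

lemma aux_orbit_stab (g : G) :
    (ConjClasses.mk g).carrier.ncard *
        (univ.filter fun x : G => x * g * x⁻¹ = g).card = Fintype.card G := by
  have h := aux_count (G := G) ⊤ g
  have h1 : (univ.filter fun x : G => x * g * x⁻¹ ∈ (⊤ : Subgroup G)) = univ := by
    ext x; simp
  have h2 : ((ConjClasses.mk g).carrier ∩ ((⊤ : Subgroup G) : Set G))
      = (ConjClasses.mk g).carrier := by simp
  rw [h1, h2, Finset.card_univ] at h
  exact h.symm
end aux

/-- For subgroups `P, Q` of a finite group `G` and uniformly random `x ∈ G`, the expected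
value of `|P ∩ Q^x|` equals `∑_C |C ∩ P|·|C ∩ Q|/|C|`, summed over conjugacy classes `C`. -/
theorem stmt_14 {G : Type*} [Group G] [Fintype G] (P Q : Subgroup G) :
    (1 / (Fintype.card G : ℝ)) *
        ∑ x : G, (Set.ncard ((P : Set G) ∩ ((fun g => x⁻¹ * g * x) '' (Q : Set G))) : ℝ)
      = ∑ᶠ C : ConjClasses G,
          (Set.ncard (C.carrier ∩ (P : Set G)) : ℝ) * Set.ncard (C.carrier ∩ (Q : Set G)) /
            Set.ncard C.carrier := by
  classical
  have cardG_pos : (0 : ℝ) < Fintype.card G := by positivity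
  have hset : ∀ x : G, ((P : Set G) ∩ ((fun g => x⁻¹ * g * x) '' (Q : Set G)))
      = {g : G | g ∈ P ∧ x * g * x⁻¹ ∈ Q} := by
    intro x
    ext g
    simp only [Set.mem_inter_iff, Set.mem_image, Set.mem_setOf_eq, SetLike.mem_coe]
    constructor
    · rintro ⟨hP, q, hq, rfl⟩
      refine ⟨hP, ?_⟩
      have hh : x * (x⁻¹ * q * x) * x⁻¹ = q := by group
      rwa [hh]
    · rintro ⟨hP, hQ⟩
      exact ⟨hP, x * g * x⁻¹, hQ, by group⟩
  have hstep1 : ∑ x : G, (Set.ncard ((P : Set G) ∩ ((fun g => x⁻¹ * g * x) '' (Q : Set G))) : ℝ)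
      = ∑ g ∈ univ.filter (fun g : G => g ∈ P),
          ((univ.filter fun x : G => x * g * x⁻¹ ∈ Q).card : ℝ) := by
    have h1 : ∀ x : G,
        (Set.ncard ((P : Set G) ∩ ((fun g => x⁻¹ * g * x) '' (Q : Set G))) : ℝ)
        = ∑ g : G, if g ∈ P ∧ x * g * x⁻¹ ∈ Q then (1 : ℝ) else 0 := by
      intro x
      rw [hset x, Set.ncard_eq_toFinset_card', Set.toFinset_setOf, Finset.sum_boole]
    simp_rw [h1]
    rw [Finset.sum_comm, Finset.sum_filter]
    refine Finset.sum_congr rfl fun g _ => ?_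
    by_cases h : g ∈ P
    · simp only [h, if_true]
      rw [Finset.card_filter]
      push_cast
      refine Finset.sum_congr rfl fun x _ => ?_
      simp [h]
    · simp only [h, if_false]
      refine Finset.sum_eq_zero fun x _ => ?_
      simp [h]
  rw [hstep1]
  have key : ∀ g : G,
      ((univ.filter fun x : G => x * g * x⁻¹ ∈ Q).card : ℝ)
      = (Fintype.card G : ℝ) *
          ((Set.ncard ((ConjClasses.mk g).carrier ∩ (Q : Set G)) : ℝ) /
            Set.ncard (ConjClasses.mk g).carrier) := by
    intro g
    have h1 := aux_count Q g
    have h2 := aux_orbit_stab g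
    have hcar_pos : 0 < (ConjClasses.mk g).carrier.ncard := by
      rw [Set.ncard_eq_toFinset_card']
      exact Finset.card_pos.mpr ⟨g, by simp [ConjClasses.mem_carrier_mk]⟩
    have hcar_pos' : (0 : ℝ) < (ConjClasses.mk g).carrier.ncard := by exact_mod_cast hcar_pos
    rw [mul_div_assoc', eq_div_iff (ne_of_gt hcar_pos')]
    have : ((univ.filter fun x : G => x * g * x⁻¹ ∈ Q).card) *
        (ConjClasses.mk g).carrier.ncard
        = Fintype.card G * ((ConjClasses.mk g).carrier ∩ (Q : Set G)).ncard := by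
      rw [h1, ← h2]; ring
    exact_mod_cast this
  simp_rw [key]
  rw [← Finset.mul_sum, one_div, inv_mul_cancel_left₀ (ne_of_gt cardG_pos)]
  rw [finsum_eq_sum_of_fintype]
  rw [← Finset.sum_fiberwise_of_maps_to (g := fun g : G => ConjClasses.mk g)
      (fun g _ => Finset.mem_univ _)
      (fun a : G =>
        (Set.ncard ((ConjClasses.mk a).carrier ∩ (Q : Set G)) : ℝ) /
          Set.ncard (ConjClasses.mk a).carrier)]
  refine Finset.sum_congr rfl fun C _ => ?_
  have hfilter : (univ.filter (fun g : G => g ∈ P)).filter (fun g => ConjClasses.mk g = C)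
      = (C.carrier ∩ (P : Set G)).toFinset := by
    ext g
    simp [ConjClasses.mem_carrier_iff_mk_eq, and_comm]
  rw [hfilter]
  have hconst : ∀ g ∈ (C.carrier ∩ (P : Set G)).toFinset,
      (Set.ncard ((ConjClasses.mk g).carrier ∩ (Q : Set G)) : ℝ) /
          Set.ncard (ConjClasses.mk g).carrier
        = (Set.ncard (C.carrier ∩ (Q : Set G)) : ℝ) / Set.ncard C.carrier := by
    intro g hg
    simp only [Set.mem_toFinset, Set.mem_inter_iff, ConjClasses.mem_carrier_iff_mk_eq] at hg
    rw [hg.1]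
  rw [Finset.sum_congr rfl hconst, Finset.sum_const, nsmul_eq_mul,
    ← Set.ncard_eq_toFinset_card']
  ring
end

section
/- In a forest F of complete rooted binary trees, for any automorphism g of F, the set of vertices of F that are either moved by g, or fixed by g but adjacent to a vertex moved by g, induces a subforest that is a disjoint union of complete rooted subtrees T_{v_1}, ..., T_{v_k}, where v_1, ..., v_k are the fixed vertices adjacent to moved vertices, and the number of leaves of F moved by g equals 2^{h_1} + ⋯ + 2^{h_k} where h_i is the height of v_i. -/
namespace Stmt18

/-- Vertices of a forest of `m` complete rooted binary trees of heights `e 0, …, e (m-1)`: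
a vertex is a tree index together with the path from the root (a list of `Bool`s of length
at most the height of that tree). -/
def Vertex (m : ℕ) (e : Fin m → ℕ) : Type :=
  {p : Fin m × List Bool // p.2.length ≤ e p.1}

variable {m : ℕ} {e : Fin m → ℕ}

/-- `a` is a child of `b` in the forest. -/
def IsChild (a b : Vertex m e) : Prop :=
  a.1.1 = b.1.1 ∧ ∃ t : Bool, a.1.2 = b.1.2 ++ [t]

/-- `a` and `b` are adjacent in the forest. -/
def Adj (a b : Vertex m e) : Prop :=
  IsChild a b ∨ IsChild b a

/-- An automorphism of the forest: a permutation of the vertices preserving the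
(rooted) child relation. -/
def IsForestAut (σ : Equiv.Perm (Vertex m e)) : Prop :=
  ∀ a b : Vertex m e, IsChild a b ↔ IsChild (σ a) (σ b)

/-- `w` belongs to the complete subtree `T_v` rooted at `v`. -/
def InSubtree (v w : Vertex m e) : Prop :=
  v.1.1 = w.1.1 ∧ v.1.2 <+: w.1.2

/-- The height of a vertex, i.e. the height of the complete subtree rooted at it. -/
def height (v : Vertex m e) : ℕ :=
  e v.1.1 - v.1.2.length

/-- `v` is a leaf of the forest. -/
def IsLeaf (v : Vertex m e) : Prop :=
  v.1.2.length = e v.1.1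

lemma Vertex.ext' {a b : Vertex m e} (h1 : a.1.1 = b.1.1) (h2 : a.1.2 = b.1.2) : a = b :=
  Subtype.ext (Prod.ext h1 h2)

instance : Finite (Vertex m e) := by
  have h : {p : Fin m × List Bool | p.2.length ≤ e p.1}.Finite := by
    apply Set.Finite.subset (Set.finite_iUnion (fun i : Fin m =>
      (Set.finite_singleton i).prod (List.finite_length_le Bool (e i))))
    intro p hp
    exact Set.mem_iUnion.2 ⟨p.1, ⟨rfl, hp⟩⟩
  exact h.to_subtype

lemma child_unique {a b b' : Vertex m e} (h : IsChild a b) (h' : IsChild a b') : b = b' := by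
  obtain ⟨h1, t, ht⟩ := h
  obtain ⟨h1', t', ht'⟩ := h'
  have heq := ht.symm.trans ht'
  have := List.append_inj' heq rfl
  exact Vertex.ext' (h1.symm.trans h1') this.1

variable {g : Equiv.Perm (Vertex m e)}

lemma aut_inv (hg : IsForestAut g) : IsForestAut g⁻¹ := by
  intro a b
  have := hg (g⁻¹ a) (g⁻¹ b)
  simp only [Equiv.Perm.inv_def, Equiv.apply_symm_apply] at this
  exact this.symm

lemma length_apply (hg : IsForestAut g) : ∀ v : Vertex m e, (g v).1.2.length = v.1.2.length := by
  suffices h : ∀ n (v : Vertex m e), v.1.2.length = n → (g v).1.2.length = n by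
    intro v; exact h _ v rfl
  intro n
  induction n with
  | zero =>
    intro v hv
    by_contra hne
    have hnil : (g v).1.2 ≠ [] := by
      intro h; rw [h] at hne; exact hne (by simpa using hv.symm) |>.elim
    obtain ⟨l, t, hl⟩ := ((g v).1.2.eq_nil_or_concat).resolve_left hnil
    have hle : l.length ≤ e (g v).1.1 := by
      have h2 := (g v).2; rw [hl] at h2; simp at h2; omega
    have hc : IsChild (g v) ⟨((g v).1.1, l), hle⟩ := ⟨rfl, t, by simpa [List.concat_eq_append] using hl⟩
    have : IsChild v (g⁻¹ ⟨((g v).1.1, l), hle⟩) := by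
      exact (hg v (g⁻¹ _)).2 ((congrArg (IsChild (g v)) (g.apply_symm_apply _)).mpr hc)
    obtain ⟨_, t', ht'⟩ := this
    have : v.1.2.length ≠ 0 := by rw [ht']; simp
    exact this hv
  | succ n ih =>
    intro v hv
    have hnil : v.1.2 ≠ [] := by intro h; rw [h] at hv; simp at hv
    obtain ⟨l, t, hl⟩ := (v.1.2.eq_nil_or_concat).resolve_left hnil
    have hle : l.length ≤ e v.1.1 := by
      have h2 := v.2; rw [hl] at h2; simp at h2; omega
    set p : Vertex m e := ⟨(v.1.1, l), hle⟩ with hp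
    have hc : IsChild v p := ⟨rfl, t, by simpa [hp, List.concat_eq_append] using hl⟩
    obtain ⟨_, t', ht'⟩ := (hg v p).1 hc
    have hpl : l.length = n := by rw [hl] at hv; simp at hv; omega
    have hgp := ih p (by simpa [hp] using hpl)
    rw [ht', List.length_append, hgp]
    simp [hp, hpl]

lemma insubtree_apply (hg : IsForestAut g) {v : Vertex m e} :
    ∀ {w : Vertex m e}, InSubtree v w → InSubtree (g v) (g w) := by
  suffices h : ∀ (s : List Bool) (w : Vertex m e), v.1.1 = w.1.1 → v.1.2 ++ s = w.1.2 →
      InSubtree (g v) (g w) by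
    intro w hw
    obtain ⟨h1, s, hs⟩ := hw
    exact h s w h1 hs
  intro s
  induction s using List.reverseRecOn with
  | nil =>
    intro w h1 hs
    have hvw : v = w := Vertex.ext' h1 (by simpa using hs)
    subst hvw; exact ⟨rfl, List.prefix_rfl⟩
  | append_singleton s t ih =>
    intro w h1 hs
    have hle : (v.1.2 ++ s).length ≤ e v.1.1 := by
      have h2 := w.2
      rw [← hs, ← h1] at h2
      simp at h2 ⊢
      omega
    set w' : Vertex m e := ⟨(v.1.1, v.1.2 ++ s), hle⟩ with hw'
    have hc : IsChild w w' := ⟨h1.symm, t, by rw [← hs]; simp [hw']⟩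
    have hin' : InSubtree (g v) (g w') := ih w' rfl rfl
    obtain ⟨hi, t', ht'⟩ := (hg w w').1 hc
    refine ⟨hin'.1.trans hi.symm, hin'.2.trans ?_⟩
    rw [ht']
    exact ⟨[t'], rfl⟩

def root (i : Fin m) : Vertex m e := ⟨(i, []), Nat.zero_le _⟩

lemma root_insubtree (i : Fin m) (w : Vertex m e) (h : w.1.1 = i) :
    InSubtree (root i) w := ⟨h.symm, List.nil_prefix⟩

lemma index_le (hg : IsForestAut g) (i : Fin m) :
    e i ≤ e ((g (root i : Vertex m e)).1.1) := by
  set d : Vertex m e := ⟨(i, List.replicate (e i) true), by simp⟩ with hd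
  have h := insubtree_apply hg (root_insubtree i d rfl)
  have hlen : (g d).1.2.length = e i := by rw [length_apply hg]; simp [hd]
  have h2 := (g d).2
  rw [hlen] at h2
  rw [h.1]
  exact h2

lemma apply_root (hg : IsForestAut g) (i : Fin m) :
    g (root i) = root ((g (root i : Vertex m e)).1.1) := by
  refine Vertex.ext' rfl ?_
  have h := length_apply hg (root i : Vertex m e)
  simp [root] at h
  exact h

lemma root_fixed (he : StrictAnti e) (hg : IsForestAut g) (i : Fin m) :
    g (root i) = root i := by
  have h1 : e i ≤ e ((g (root i : Vertex m e)).1.1) := index_le hg i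
  set j := (g (root i : Vertex m e)).1.1 with hj
  have hr : g (root i) = root j := apply_root hg i
  have h2 : e j ≤ e ((g⁻¹ (root j : Vertex m e)).1.1) := index_le (aut_inv hg) j
  have hinvr : g⁻¹ (root j) = root i := by rw [← hr]; simp
  rw [hinvr] at h2
  have hji : j = i := he.injective (le_antisymm h1 h2).symm
  rw [hr, hji]

lemma index_apply (he : StrictAnti e) (hg : IsForestAut g) (v : Vertex m e) :
    (g v).1.1 = v.1.1 := by
  have h := insubtree_apply hg (root_insubtree v.1.1 v rfl)
  rw [root_fixed he hg] at h
  exact h.1.symm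

lemma ancestor_fixed (hg : IsForestAut g) {u : Vertex m e} :
    ∀ {v : Vertex m e}, g v = v → InSubtree u v → g u = u := by
  suffices h : ∀ (s : List Bool) (v : Vertex m e), g v = v → u.1.1 = v.1.1 →
      u.1.2 ++ s = v.1.2 → g u = u by
    intro v hfix hin
    obtain ⟨h1, s, hs⟩ := hin
    exact h s v hfix h1 hs
  intro s
  induction s using List.reverseRecOn with
  | nil =>
    intro v hfix h1 hs
    have : u = v := Vertex.ext' h1 (by simpa using hs)
    rw [this]; exact hfix
  | append_singleton s t ih =>
    intro v hfix h1 hs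
    have hle : (u.1.2 ++ s).length ≤ e u.1.1 := by
      have h2 := v.2
      rw [← hs, ← h1] at h2
      simp at h2 ⊢
      omega
    set p : Vertex m e := ⟨(u.1.1, u.1.2 ++ s), hle⟩ with hp
    have hc : IsChild v p := ⟨h1.symm, t, by rw [← hs]; simp [hp]⟩
    have hc' : IsChild v (g p) := by
      have := (hg v p).1 hc
      rwa [hfix] at this
    have hpfix : g p = p := child_unique hc' hc
    exact ih p hpfix rfl rfl


lemma mem_B_child (hg : IsForestAut g) {v : Vertex m e} (hfix : g v = v) {u : Vertex m e}
    (hadj : Adj v u) (hu : g u ≠ u) : ∃ c, IsChild c v ∧ g c ≠ c := by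
  cases hadj with
  | inl h =>
    obtain ⟨h1, t, ht⟩ := h
    exact absurd (ancestor_fixed hg hfix ⟨h1.symm, [t], ht.symm⟩) hu
  | inr h => exact ⟨u, h, hu⟩

lemma not_leaf_of_child {v c : Vertex m e} (hc : IsChild c v) : ¬ IsLeaf v := by
  obtain ⟨h1, t, ht⟩ := hc
  have h2 := c.2
  rw [ht, h1] at h2
  simp at h2
  intro hl
  rw [IsLeaf] at hl
  omega

lemma moved_in_subtree (hg : IsForestAut g) {v : Vertex m e} (hfix : g v = v)
    {c : Vertex m e} (hc : IsChild c v) (hcm : g c ≠ c)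
    {w : Vertex m e} (hw : InSubtree v w) (hne : w ≠ v) : g w ≠ w := by
  intro hwfix
  obtain ⟨h1, s, hs⟩ := hw
  have hsne : s ≠ [] := by
    rintro rfl
    exact hne (Vertex.ext' h1 (by simpa using hs)).symm
  obtain ⟨t0, s', rfl⟩ := List.exists_cons_of_ne_nil hsne
  have hle : (v.1.2 ++ [t0]).length ≤ e v.1.1 := by
    have h2 := w.2
    rw [← hs, ← h1] at h2
    simp at h2 ⊢
    omega
  set c' : Vertex m e := ⟨(v.1.1, v.1.2 ++ [t0]), hle⟩ with hc'
  have hin : InSubtree c' w := ⟨h1, s', by rw [← hs]; simp [hc']⟩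
  have hc'fix : g c' = c' := ancestor_fixed hg hwfix hin
  have hcneq : c ≠ c' := fun h => hcm (by rw [h, hc'fix, ← h])
  obtain ⟨hci, t, hct⟩ := hc
  have htne : t ≠ t0 := by
    intro h
    exact hcneq (Vertex.ext' hci (by rw [hct, h]))
  have hgc : IsChild (g c) v := by
    have := (hg c v).1 ⟨hci, t, hct⟩
    rwa [hfix] at this
  obtain ⟨hgci, tb, hgct⟩ := hgc
  have htb : tb = t ∨ tb = t0 := by
    revert htne; rcases t <;> rcases t0 <;> rcases tb <;> simp
  cases htb with
  | inl h =>
    exact hcm (Vertex.ext' (hgci.trans hci.symm) (by rw [hgct, hct, h]))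
  | inr h =>
    have : g c = c' := Vertex.ext' (by simp [hc', hgci]) (by simp [hc', hgct, h])
    rw [← hc'fix] at this
    exact hcneq (g.injective this)

lemma exists_boundary (he : StrictAnti e) (hg : IsForestAut g) :
    ∀ {w : Vertex m e}, g w ≠ w →
      ∃ v, (g v = v ∧ ∃ c, IsChild c v ∧ g c ≠ c) ∧ InSubtree v w := by
  suffices h : ∀ n (w : Vertex m e), w.1.2.length = n → g w ≠ w →
      ∃ v, (g v = v ∧ ∃ c, IsChild c v ∧ g c ≠ c) ∧ InSubtree v w by
    intro w hw; exact h _ w rfl hw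
  intro n
  induction n with
  | zero =>
    intro w hlen hw
    have : w = root w.1.1 := Vertex.ext' rfl (by simpa [root] using List.length_eq_zero_iff.1 hlen)
    rw [this] at hw
    exact absurd (root_fixed he hg _) hw
  | succ n ih =>
    intro w hlen hw
    have hnil : w.1.2 ≠ [] := by intro h; rw [h] at hlen; simp at hlen
    obtain ⟨l, t, hl⟩ := (w.1.2.eq_nil_or_concat).resolve_left hnil
    have hle : l.length ≤ e w.1.1 := by
      have h2 := w.2; rw [hl] at h2; simp at h2; omega
    set p : Vertex m e := ⟨(w.1.1, l), hle⟩ with hp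
    have hc : IsChild w p := ⟨rfl, t, by simpa [hp, List.concat_eq_append] using hl⟩
    by_cases hpfix : g p = p
    · exact ⟨p, ⟨hpfix, w, hc, hw⟩, rfl, [t], by simp [hp]; rw [← List.concat_eq_append, ← hl]⟩
    · have hplen : l.length = n := by rw [hl] at hlen; simp at hlen; omega
      obtain ⟨v, hvB, hin⟩ := ih p (by simpa [hp] using hplen) hpfix
      refine ⟨v, hvB, hin.1.trans rfl, hin.2.trans ⟨[t], ?_⟩⟩
      simp [hp]
      rw [← List.concat_eq_append, ← hl]

lemma card_length_eq (k : ℕ) : Nat.card {l : List Bool // l.length = k} = 2 ^ k := by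
  have h : Nat.card (List.Vector Bool k) = 2 ^ k := by
    rw [Nat.card_eq_fintype_card, card_vector, Fintype.card_bool]
  exact h

lemma ncard_leaves (v : Vertex m e) :
    Set.ncard {w : Vertex m e | IsLeaf w ∧ InSubtree v w} = 2 ^ height v := by
  rw [← Nat.card_coe_set_eq, ← card_length_eq (height v)]
  refine Nat.card_congr ⟨fun w => ⟨w.1.1.2.drop v.1.2.length, ?_⟩,
    fun l => ⟨⟨(v.1.1, v.1.2 ++ l.1), ?_⟩, ?_, ?_⟩, ?_, ?_⟩
  · have h1 : IsLeaf w.1 := w.2.1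
    have h2 : InSubtree v w.1 := w.2.2
    rw [List.length_drop]
    rw [IsLeaf] at h1
    rw [h1, height, h2.1]
  · have hv := v.2
    have hl := l.2
    simp only [List.length_append, hl, height]
    omega
  · have hv := v.2
    have hl := l.2
    simp only [IsLeaf, List.length_append, hl, height]
    omega
  · exact ⟨rfl, l.1, rfl⟩
  · intro w
    apply Subtype.ext
    apply Vertex.ext'
    · exact w.2.2.1
    · obtain ⟨s, hs⟩ := w.2.2.2
      simp only [← hs, List.drop_left]
  · intro l
    apply Subtype.ext
    simp only [List.drop_left]


/-- For an automorphism `g` of a forest of complete rooted binary trees (of pairwise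
distinct heights `e 0 > ⋯ > e (m-1)`), the vertices that are moved by `g` or fixed by `g`
but adjacent to a moved vertex form a disjoint union of the complete subtrees rooted at
the fixed vertices `v` adjacent to moved vertices, and the number of leaves moved by `g`
is `∑_v 2^(height v)` over these vertices `v`. -/
theorem stmt_18 (he : StrictAnti e) (g : Equiv.Perm (Vertex m e)) (hg : IsForestAut g)
    (B : Set (Vertex m e))
    (hB : B = {v | g v = v ∧ ∃ w, Adj v w ∧ g w ≠ w}) :
    (∀ w : Vertex m e, (g w ≠ w ∨ w ∈ B) ↔ ∃ v ∈ B, InSubtree v w) ∧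
      (∀ v ∈ B, ∀ v' ∈ B, v ≠ v' → ¬∃ w, InSubtree v w ∧ InSubtree v' w) ∧
      Set.ncard {w : Vertex m e | IsLeaf w ∧ g w ≠ w} = ∑ᶠ v ∈ B, 2 ^ height v := by
  subst hB
  classical
  have key1 : ∀ w : Vertex m e, (g w ≠ w ∨ w ∈ {v | g v = v ∧ ∃ w, Adj v w ∧ g w ≠ w}) ↔
      ∃ v ∈ {v : Vertex m e | g v = v ∧ ∃ w, Adj v w ∧ g w ≠ w}, InSubtree v w := by
    intro w
    constructor
    · rintro (hw | hw)
      · obtain ⟨v, ⟨hv, c, hc, hcm⟩, hvw⟩ := exists_boundary he hg hw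
        exact ⟨v, ⟨hv, c, Or.inr hc, hcm⟩, hvw⟩
      · exact ⟨w, hw, rfl, List.prefix_rfl⟩
    · rintro ⟨v, hvB, hvw⟩
      by_cases hwv : w = v
      · exact Or.inr (hwv ▸ hvB)
      · obtain ⟨hv, u, hadj, hu⟩ := hvB
        obtain ⟨c, hc, hcm⟩ := mem_B_child hg hv hadj hu
        exact Or.inl (moved_in_subtree hg hv hc hcm hvw hwv)
  have key2 : ∀ v ∈ {v : Vertex m e | g v = v ∧ ∃ w, Adj v w ∧ g w ≠ w},
      ∀ v' ∈ {v : Vertex m e | g v = v ∧ ∃ w, Adj v w ∧ g w ≠ w}, v ≠ v' →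
      ¬∃ w, InSubtree v w ∧ InSubtree v' w := by
    rintro v ⟨hv, u, hadj, hu⟩ v' ⟨hv', u', hadj', hu'⟩ hne ⟨w, hw, hw'⟩
    obtain ⟨c, hc, hcm⟩ := mem_B_child hg hv hadj hu
    obtain ⟨c', hc', hcm'⟩ := mem_B_child hg hv' hadj' hu'
    have hidx : v.1.1 = v'.1.1 := hw.1.trans hw'.1.symm
    rcases List.prefix_or_prefix_of_prefix hw.2 hw'.2 with hp | hp
    · exact moved_in_subtree hg hv hc hcm ⟨hidx, hp⟩ (Ne.symm hne) hv'
    · exact moved_in_subtree hg hv' hc' hcm' ⟨hidx.symm, hp⟩ hne hv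
  refine ⟨key1, key2, ?_⟩
  set B : Set (Vertex m e) := {v | g v = v ∧ ∃ w, Adj v w ∧ g w ≠ w} with hBdef
  set L : Vertex m e → Set (Vertex m e) := fun v => {w | IsLeaf w ∧ InSubtree v w} with hLdef
  have hSeq : {w : Vertex m e | IsLeaf w ∧ g w ≠ w} = ⋃ v ∈ B, L v := by
    ext w
    simp only [Set.mem_setOf_eq, Set.mem_iUnion, hLdef]
    constructor
    · rintro ⟨hl, hm⟩
      obtain ⟨v, hvB, hvw⟩ := (key1 w).1 (Or.inl hm)
      exact ⟨v, hvB, hl, hvw⟩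
    · rintro ⟨v, hvB, hl, hin⟩
      refine ⟨hl, ?_⟩
      obtain ⟨hv, u, hadj, hu⟩ := hvB
      obtain ⟨c, hc, hcm⟩ := mem_B_child hg hv hadj hu
      have hwv : w ≠ v := by
        rintro rfl
        exact not_leaf_of_child hc hl
      exact moved_in_subtree hg hv hc hcm hin hwv
  have hBfin : B.Finite := Set.toFinite _
  have hLfin : ∀ v : Vertex m e, (L v).Finite := fun v => Set.toFinite _
  have h1 : (⋃ v ∈ B, L v).Finite := Set.toFinite _
  rw [hSeq, Set.ncard_eq_toFinset_card _ h1, finsum_mem_eq_finite_toFinset_sum _ hBfin]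
  have hto : h1.toFinset = hBfin.toFinset.biUnion (fun v => (hLfin v).toFinset) := by
    ext w
    simp [Set.Finite.mem_toFinset]
  rw [hto, Finset.card_biUnion]
  · apply Finset.sum_congr rfl
    intro v hv
    rw [← Set.ncard_eq_toFinset_card _ (hLfin v)]
    exact ncard_leaves v
  · intro v hv v' hv' hne
    rw [Function.onFun, Finset.disjoint_left]
    intro w hw hw'
    rw [Set.Finite.mem_toFinset] at hw hw'
    rw [Finset.mem_coe, Set.Finite.mem_toFinset] at hv hv'
    exact key2 v hv v' hv' hne ⟨w, hw.2, hw'.2⟩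


end Stmt18
end
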